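/- arXiv:1610.08689 — 2 statements merged into one kernel-verified Lean document; each statement's English description precedes it below -/
import Mathlib

section
/- Let (𝓜, Ω, ω) be a (pre)multisymplectic system admitting a solution X₀ with i(X₀)Ω = 0 and i(X₀)ω = 1. Then a form ξ ∈ Ω^{m−1}(𝓜) satisfies L(X)ξ = 0 for every m-multivector field X with i(X)Ω = 0, i(X)ω ≠ 0 if and only if L(Z)ξ = 0 for every m-multivector field Z with i(Z)Ω = 0 (with no transversality condition). -/
/-- An abstract context for the calculus of multivector fields and differential
forms on (the total space of) a fiber bundle `κ : 𝓜 → M`, as used in the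
(pre)multisymplectic formulation of classical field theories.  `Form` plays the
role of the (graded) space of differential forms on `𝓜` and `MV` that of
multivector fields on `𝓜`. -/
structure VarCtx where
  /-- differential forms on `𝓜` -/
  Form : Type
  /-- multivector fields on `𝓜` -/
  MV : Type
  [formGrp : AddCommGroup Form]
  [formMod : Module ℝ Form]
  [mvGrp : AddCommGroup MV]
  [mvMod : Module ℝ MV]
  /-- homogeneous forms of degree `k` -/
  Fh : ℕ → Submodule ℝ Form
  /-- homogeneous multivector fields of degree `j` -/
  Mh : ℕ → Submodule ℝ MV
  /-- exterior differential -/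
  d : Form →ₗ[ℝ] Form
  d_d : ∀ ω, d (d ω) = 0
  d_deg : ∀ k, ∀ ω ∈ Fh k, d ω ∈ Fh (k + 1)
  /-- contraction (interior product) `i(X)ω` of a multivector field with a form -/
  ins : MV →ₗ[ℝ] Form →ₗ[ℝ] Form
  ins_deg : ∀ j k X ω, X ∈ Mh j → ω ∈ Fh k → ins X ω ∈ Fh (k - j)
  /-- Schouten–Nijenhuis bracket of multivector fields -/
  sb : MV → MV → MV
  sb_deg : ∀ i j X Y, X ∈ Mh i → Y ∈ Mh j → sb X Y ∈ Mh (i + j - 1)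
  /-- wedge (exterior) product of multivector fields -/
  wedge : MV → MV → MV
  wedge_deg : ∀ i j X Y, X ∈ Mh i → Y ∈ Mh j → wedge X Y ∈ Mh (i + j)

attribute [instance] VarCtx.formGrp VarCtx.formMod VarCtx.mvGrp VarCtx.mvMod

namespace VarCtx

variable (C : VarCtx)

/-- The Lie derivative along a multivector field `X` of degree `m`,
`L(X) = d ∘ i(X) − (−1)^m i(X) ∘ d`. -/
def lie (m : ℕ) (X : C.MV) : Module.End ℝ C.Form :=
  C.d ∘ₗ C.ins X - ((-1 : ℝ) ^ m) • ((C.ins X : C.Form →ₗ[ℝ] C.Form) ∘ₗ C.d)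

end VarCtx

/-- Suppose the (pre)multisymplectic system `(𝓜, Ω, ω)`
admits a solution `X₀` with `i(X₀)Ω = 0` and `i(X₀)ω = 1` (the degree-`0` form
`oneF` being the constant function `1`).  Then `ξ ∈ Ω^{m−1}(𝓜)` satisfies
`L(X)ξ = 0` for every `m`-multivector field `X` with `i(X)Ω = 0`, `i(X)ω ≠ 0`
if and only if `L(Z)ξ = 0` for every `m`-multivector field `Z` with
`i(Z)Ω = 0` (no transversality condition). -/
theorem conserved_iff_kernel_invariant (C : VarCtx) (m : ℕ)
    (Ω ω : C.Form) (hΩ : Ω ∈ C.Fh (m + 1)) (hω : ω ∈ C.Fh m)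
    (oneF : C.Form) (hone : oneF ∈ C.Fh 0) (hone0 : oneF ≠ 0)
    (X₀ : C.MV) (hX₀m : X₀ ∈ C.Mh m) (hX₀Ω : C.ins X₀ Ω = 0)
    (hX₀ω : C.ins X₀ ω = oneF)
    (ξ : C.Form) (hξ : ξ ∈ C.Fh (m - 1))
    -- the convention `i(Z)ξ = 0` for `Z` of degree `m > m − 1`
    (hconv : ∀ Z ∈ C.Mh m, C.ins Z ξ = 0) :
    (∀ X ∈ C.Mh m, C.ins X Ω = 0 → C.ins X ω ≠ 0 → C.lie m X ξ = 0) ↔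
    (∀ Z ∈ C.Mh m, C.ins Z Ω = 0 → C.lie m Z ξ = 0) := by
  constructor
  · intro h Z hZ hZΩ
    by_cases hc : C.ins Z ω + oneF = 0
    · apply h Z hZ hZΩ
      intro h0
      rw [h0, zero_add] at hc
      exact hone0 hc
    · have h1 := h (Z + X₀) (add_mem hZ hX₀m)
        (by rw [map_add, LinearMap.add_apply, hZΩ, hX₀Ω, add_zero])
        (by rw [map_add, LinearMap.add_apply, hX₀ω]; exact hc)
      have h2 := h X₀ hX₀m hX₀Ω (by rw [hX₀ω]; exact hone0)
      have hadd : C.lie m (Z + X₀) ξ = C.lie m Z ξ + C.lie m X₀ ξ := by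
        simp only [VarCtx.lie, LinearMap.sub_apply, LinearMap.smul_apply,
          LinearMap.comp_apply, map_add, LinearMap.add_apply, smul_add]
        abel
      rw [hadd, h2, add_zero] at h1
      exact h1
  · intro h X hX hXΩ _
    exact h X hX hXΩ
end

section
/- Generalized Noether theorem: Let Ω be a closed (m+1)-form and Y a vector field that is an infinitesimal symmetry (i.e., [Y, X] ∈ ker^m Ω for every X ∈ ker^m Ω) and satisfies L^n(Y)Ω = 0, with L^{n−1}(Y) i(Y)Ω = dξ_Y for some ξ_Y ∈ Ω^{m−1}(𝓜). Then for every m-multivector field X with i(X)Ω = 0 and i(X)ω ≠ 0, L(X)ξ_Y = 0; i.e., ξ_Y is a conserved quantity. -/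
/-- **Generalized Noether theorem.** Let `Ω` be a closed
`(m+1)`-form and `Y` a vector field which is an infinitesimal symmetry
(`[Y,X] ∈ ker^m Ω` for every `X ∈ ker^m Ω`) and satisfies `L^n(Y)Ω = 0`, with
`L^{n−1}(Y) i(Y)Ω = dξ_Y` for some `ξ_Y ∈ Ω^{m−1}(𝓜)`.  Then for every
`m`-multivector field `X` with `i(X)Ω = 0` and `i(X)ω ≠ 0`, `L(X)ξ_Y = 0`;
that is, `ξ_Y` is a conserved quantity. -/
theorem generalized_noether (C : VarCtx) (m n : ℕ) (hn : 1 ≤ n)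
    (Ω ω : C.Form) (hΩ : Ω ∈ C.Fh (m + 1)) (hcl : C.d Ω = 0) (hω : ω ∈ C.Fh m)
    (Y : C.MV) (hY1 : Y ∈ C.Mh 1)
    -- `Y` is an infinitesimal symmetry
    (hsym : ∀ X ∈ C.Mh m, C.ins X Ω = 0 → C.ins (C.sb Y X) Ω = 0)
    -- `Y` is an infinitesimal Cartan symmetry of order `n`
    (hLn : (C.lie 1 Y ^ n) Ω = 0)
    (ξ : C.Form) (hξ : ξ ∈ C.Fh (m - 1))
    (hYξ : (C.lie 1 Y ^ (n - 1)) (C.ins Y Ω) = C.d ξ)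
    -- the convention `i(X)ξ = 0` for `X` of degree `m > m − 1`
    (hconv : ∀ X ∈ C.Mh m, C.ins X ξ = 0)
    -- the commutation identity `i(X)L(Y)α = L(Y)i(X)α − i([Y,X])α`
    (hcomm : ∀ X ∈ C.Mh m, ∀ α : C.Form,
      C.ins X (C.lie 1 Y α) = C.lie 1 Y (C.ins X α) - C.ins (C.sb Y X) α)
    -- `i(X)i(Y)Ω = 0` whenever `i(X)Ω = 0` (and similarly for `[Y,X] ∈ ker^m Ω`)
    (hvan : ∀ X ∈ C.Mh m, C.ins X Ω = 0 → C.ins X (C.ins Y Ω) = 0) :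
    ∀ X ∈ C.Mh m, C.ins X Ω = 0 → C.ins X ω ≠ 0 → C.lie m X ξ = 0 := by
  -- key claim: iterated Lie derivatives of `i(Y)Ω` are killed by any `X ∈ ker^m Ω`
  have key : ∀ k : ℕ, ∀ X ∈ C.Mh m, C.ins X Ω = 0 →
      C.ins X ((C.lie 1 Y ^ k) (C.ins Y Ω)) = 0 := by
    intro k
    induction k with
    | zero => intro X hX h0; simpa using hvan X hX h0
    | succ k ih =>
      intro X hX h0
      have hsb : C.sb Y X ∈ C.Mh m := by
        have := C.sb_deg 1 m Y X hY1 hX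
        simpa using this
      have h1 : C.ins (C.sb Y X) Ω = 0 := hsym X hX h0
      have := hcomm X hX ((C.lie 1 Y ^ k) (C.ins Y Ω))
      rw [pow_succ']
      show C.ins X (C.lie 1 Y ((C.lie 1 Y ^ k) (C.ins Y Ω))) = 0
      rw [this, ih X hX h0, ih (C.sb Y X) hsb h1, map_zero, sub_zero]
  intro X hX h0 _
  have hdξ : C.ins X (C.d ξ) = 0 := by
    rw [← hYξ]; exact key (n - 1) X hX h0
  show (C.d ∘ₗ C.ins X - ((-1 : ℝ) ^ m) • ((C.ins X : C.Form →ₗ[ℝ] C.Form) ∘ₗ C.d)) ξ = 0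
  simp [hconv X hX, hdξ]
end
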